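/- (Lemma 3.1, backward problem.) Let N ≥ 1, 1 ≤ L ≤ M, let μ_1, ..., μ_L be pairwise distinct positive real numbers, let T > 0, and let 0 < t_1 < t_2 < ... < t_M. Let Φ be a real N × L matrix with linearly independent columns, let F = diag(f_1, ..., f_L) with every f_i ≠ 0, let D = diag(d_1, ..., d_L) with d_i = exp(−μ_i T), and let J be the L × M matrix with entries J(i, j) = exp(−μ_i · t_j). Set A = Φ F J and Ã = Φ D F J. Then the column space of A equals the column space of Ã, i.e., span{y_1, ..., y_M} = span{ỹ_1, ..., ỹ_M}, where y_j and ỹ_j denote the j-th columns of A and Ã respectively. -/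

import Mathlib

/-!
Both `A` and `Ã` factor as `(Φ F) K` with `K = (exp (-μ_i s_j))`, where `s_j = t_j` for `A` and
`s_j = t_j + T` for `Ã` (the factor `D` shifts the times). For distinct `μ_i` and at least `L`
distinct times, `K` has full row rank: a vanishing exponential sum `∑ c_i exp (a_i x)` with `k`
distinct exponents and at least `k` zeros is identically zero, by Rolle's theorem and induction on `k`.
Hence `K` is surjective and both column spaces equal the range of `Φ F`.
-/

open Real Function Matrix

theorem exists_strictMono_deriv_eq_zero {m : ℕ} {f : ℝ → ℝ} (hf : Continuous f)
    {z : Fin (m + 1) → ℝ} (hz : StrictMono z) (h0 : ∀ j, f (z j) = 0) :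
    ∃ w : Fin m → ℝ, StrictMono w ∧ ∀ j, deriv f (w j) = 0 := by
  choose w hw hw0 using fun j : Fin m =>
    exists_deriv_eq_zero (hz j.castSucc_lt_succ) hf.continuousOn (by rw [h0, h0])
  refine ⟨w, fun j₁ j₂ hj => ?_, hw0⟩
  calc w j₁ < z j₁.succ := (hw j₁).2
    _ ≤ z j₂.castSucc := hz.monotone (Fin.succ_le_castSucc_iff.mpr hj)
    _ < w j₂ := (hw j₂).1

theorem hasDerivAt_sum_mul_exp {ι : Type*} [Fintype ι] (c a : ι → ℝ) (x : ℝ) :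
    HasDerivAt (fun x => ∑ i, c i * exp (a i * x)) (∑ i, c i * a i * exp (a i * x)) x := by
  refine HasDerivAt.fun_sum fun i _ => ?_
  simpa [mul_comm, mul_left_comm, mul_assoc] using
    (((hasDerivAt_id x).const_mul (a i)).exp).const_mul (c i)

theorem sum_mul_exp_sub_mul {ι : Type*} [Fintype ι] (c a : ι → ℝ) (s x : ℝ) :
    ∑ i, c i * exp ((a i - s) * x) = exp (-(s * x)) * ∑ i, c i * exp (a i * x) := by
  rw [Finset.mul_sum]
  congr 1 with i
  rw [sub_mul, sub_eq_add_neg, exp_add]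
  ring

theorem eq_zero_of_sum_mul_exp_eq_zero {k m : ℕ} (hkm : k ≤ m) {a : Fin k → ℝ}
    (ha : Injective a) {z : Fin m → ℝ} (hz : StrictMono z) {c : Fin k → ℝ}
    (h0 : ∀ j, ∑ i, c i * exp (a i * z j) = 0) : c = 0 := by
  induction k generalizing m with
  | zero => exact Subsingleton.elim _ _
  | succ k ih =>
    obtain ⟨m, rfl⟩ : ∃ m', m = m' + 1 := Nat.exists_eq_succ_of_ne_zero (by omega)
    -- Shifting the exponents makes the last term constant, so differentiating removes it.
    set b := fun i => a i - a (Fin.last k)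
    have hb0 : ∀ j, ∑ i, c i * exp (b i * z j) = 0 := fun j => by
      simp only [b, sum_mul_exp_sub_mul, h0, mul_zero]
    obtain ⟨w, hw, hw0⟩ := exists_strictMono_deriv_eq_zero
      (f := fun x => ∑ i, c i * exp (b i * x)) (by fun_prop) hz hb0
    have hinit : (fun i : Fin k => c i.castSucc * b i.castSucc) = 0 := by
      refine ih (by omega) (a := fun i => b i.castSucc) ?_ hw fun j => ?_
      · intro i₁ i₂ h
        exact Fin.castSucc_injective k (ha (sub_left_injective h))
      · have := (hasDerivAt_sum_mul_exp c b (w j)).deriv ▸ hw0 j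
        simpa [Fin.sum_univ_castSucc, b, mul_assoc] using this
    have hc : ∀ i : Fin k, c i.castSucc = 0 := fun i =>
      (mul_eq_zero.mp (congrFun hinit i)).resolve_right
        (sub_ne_zero.mpr (ha.ne (Fin.castSucc_lt_last i).ne))
    have hlast : c (Fin.last k) = 0 := by
      simpa [Fin.sum_univ_castSucc, hc] using h0 0
    funext i
    induction i using Fin.lastCases with
    | last => exact hlast
    | cast i => exact hc i

theorem Matrix.mulVecLin_surjective_of_linearIndependent_row {K m n : Type*} [Field K]
    [Fintype m] [Fintype n] {A : Matrix m n K} (h : LinearIndependent K A.row) :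
    Surjective A.mulVecLin := by
  rw [← LinearMap.range_eq_top]
  apply Submodule.eq_top_of_finrank_eq
  rw [← Matrix.rank, h.rank_matrix, Module.finrank_fintype_fun_eq_card]

theorem Matrix.range_mulVecLin_mul_of_surjective {R l m n : Type*} [CommSemiring R]
    [Fintype m] [Fintype n] (A : Matrix l m R) {B : Matrix m n R} (hB : Surjective B.mulVecLin) :
    LinearMap.range (A * B).mulVecLin = LinearMap.range A.mulVecLin := by
  rw [mulVecLin_mul, LinearMap.range_comp, LinearMap.range_eq_top.mpr hB, Submodule.map_top]

theorem mulVecLin_exp_neg_mul_surjective {L M : ℕ} (hLM : L ≤ M) {μ : Fin L → ℝ}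
    (hμ : Injective μ) {t : Fin M → ℝ} (ht : StrictMono t) :
    Surjective (of fun i j => exp (-μ i * t j)).mulVecLin := by
  refine mulVecLin_surjective_of_linearIndependent_row (Fintype.linearIndependent_iff.mpr ?_)
  intro c hc
  refine congrFun (eq_zero_of_sum_mul_exp_eq_zero hLM (neg_injective.comp hμ) ht fun j => ?_)
  simpa using congrFun hc j

theorem column_space_eq_backward_general (N L M : ℕ) (hLM : L ≤ M)
    (μ : Fin L → ℝ) (hμ : Function.Injective μ)
    (T : ℝ) (t : Fin M → ℝ) (ht : StrictMono t)
    (Φ : Matrix (Fin N) (Fin L) ℝ)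
    (f : Fin L → ℝ)
    (J : Matrix (Fin L) (Fin M) ℝ) (hJ : ∀ i j, J i j = Real.exp (-μ i * t j))
    (A Atil : Matrix (Fin N) (Fin M) ℝ)
    (hA : A = Φ * Matrix.diagonal f * J)
    (hAtil : Atil = Φ * Matrix.diagonal (fun i => Real.exp (-μ i * T)) *
      Matrix.diagonal f * J) :
    Submodule.span ℝ (Set.range fun j : Fin M => fun i : Fin N => A i j) =
      Submodule.span ℝ (Set.range fun j : Fin M => fun i : Fin N => Atil i j) := by
  have hJ' : J = of fun i j => exp (-μ i * t j) := Matrix.ext hJ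
  have hAtil' : Atil = Φ * diagonal f * of fun i j => exp (-μ i * (t j + T)) := by
    have hDF : diagonal (fun i => exp (-μ i * T)) * diagonal f =
        diagonal f * diagonal fun i => exp (-μ i * T) := by
      simp only [diagonal_mul_diagonal, mul_comm]
    rw [hAtil, hJ', Matrix.mul_assoc Φ, hDF, ← Matrix.mul_assoc, Matrix.mul_assoc (Φ * _)]
    congr 1
    ext i j
    simp [mul_add, exp_add, mul_comm]
  change Submodule.span ℝ (Set.range A.col) = Submodule.span ℝ (Set.range Atil.col)
  rw [← range_mulVecLin, ← range_mulVecLin, hA, hAtil', hJ',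
    range_mulVecLin_mul_of_surjective _ (mulVecLin_exp_neg_mul_surjective hLM hμ ht),
    range_mulVecLin_mul_of_surjective _
      (mulVecLin_exp_neg_mul_surjective hLM hμ (ht.add_const T))]

/-- Lemma 3.1 (backward problem): with `A = Φ F J` and `Ã = Φ D F J`, where
`D = diag(exp(−μ_i T))` and `J(i,j) = exp(−μ_i t_j)`,
the column spaces of `A` and `Ã` coincide. -/
theorem column_space_eq_backward (N L M : ℕ) (hN : 1 ≤ N) (hL : 1 ≤ L) (hLM : L ≤ M)
    (μ : Fin L → ℝ) (hμ : Function.Injective μ) (hμpos : ∀ i, 0 < μ i)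
    (T : ℝ) (hT : 0 < T) (t : Fin M → ℝ) (ht : StrictMono t) (htpos : ∀ j, 0 < t j)
    (Φ : Matrix (Fin N) (Fin L) ℝ)
    (hΦ : LinearIndependent ℝ (fun j : Fin L => fun i : Fin N => Φ i j))
    (f : Fin L → ℝ) (hf : ∀ i, f i ≠ 0)
    (J : Matrix (Fin L) (Fin M) ℝ) (hJ : ∀ i j, J i j = Real.exp (-μ i * t j))
    (A Atil : Matrix (Fin N) (Fin M) ℝ)
    (hA : A = Φ * Matrix.diagonal f * J)
    (hAtil : Atil = Φ * Matrix.diagonal (fun i => Real.exp (-μ i * T)) *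
      Matrix.diagonal f * J) :
    Submodule.span ℝ (Set.range fun j : Fin M => fun i : Fin N => A i j) =
      Submodule.span ℝ (Set.range fun j : Fin M => fun i : Fin N => Atil i j) :=
  column_space_eq_backward_general N L M hLM μ hμ T t ht Φ f J hJ A Atil hA hAtil
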